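/- arXiv:2108.10009 — 4 statements merged into one kernel-verified Lean document; each statement's English description precedes it below -/
import Mathlib

section
/- For any 0 < R < μ_max, the equation μ(I) = R, i.e. (Rμ_max/(θI*²))I² + (R − μ_max − 2Rμ_max/(θI*))I + Rμ_max/θ = 0, has exactly two real roots, both positive, one in (0, I*) and one in (I*, ∞). -/
/-!
Clearing denominators, `haldaneQuad` at `I*` equals `(R - μ_max) I* < 0`, while its value at `0`
is `R μ_max / θ > 0` and its leading coefficient is positive. An upward parabola that is
positive at `0` and negative at `I* > 0` has exactly two roots, one in `(0, I*)` and one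
in `(I*, ∞)`.
-/

open Set

/-- The quadratic obtained from solving μ(I) = R for the Haldane growth function. -/
noncomputable def haldaneQuad (μmax θ Istar R I : ℝ) : ℝ :=
  (R * μmax / (θ * Istar ^ 2)) * I ^ 2
    + (R - μmax - 2 * R * μmax / (θ * Istar)) * I + R * μmax / θ

theorem quadratic_eq_mul_sub_mul_sub {K : Type*} [Field K] [NeZero (2 : K)] {a b c s : K}
    (ha : a ≠ 0) (hs : discrim a b c = s * s) (x : K) :
    a * x ^ 2 + b * x + c = a * (x - (-b - s) / (2 * a)) * (x - (-b + s) / (2 * a)) := by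
  rw [discrim] at hs
  have h2 : (2 : K) ≠ 0 := two_ne_zero
  field_simp
  linear_combination (-1) * hs

theorem exists_quadratic_eq_mul_sub_mul_sub_of_neg {a b c x : ℝ} (ha : 0 < a)
    (hx : a * x ^ 2 + b * x + c < 0) :
    ∃ r₁ r₂ : ℝ, r₁ < x ∧ x < r₂ ∧ ∀ y, a * y ^ 2 + b * y + c = a * (y - r₁) * (y - r₂) := by
  have hD : 0 < discrim a b c := by
    rw [discrim]
    nlinarith [sq_nonneg (2 * a * x + b)]
  obtain ⟨s, hs, hss⟩ : ∃ s : ℝ, 0 < s ∧ discrim a b c = s * s :=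
    ⟨√(discrim a b c), Real.sqrt_pos.mpr hD, (Real.mul_self_sqrt hD.le).symm⟩
  have hfac := quadratic_eq_mul_sub_mul_sub ha.ne' hss
  have hr : (-b - s) / (2 * a) < (-b + s) / (2 * a) := by gcongr; linarith
  have hx' : (x - (-b - s) / (2 * a)) * (x - (-b + s) / (2 * a)) < 0 :=
    (pos_iff_neg_of_mul_neg (by rwa [hfac, mul_assoc] at hx)).mp ha
  refine ⟨(-b - s) / (2 * a), (-b + s) / (2 * a), ?_, ?_, hfac⟩ <;> nlinarith

theorem exists_two_pos_roots_of_quadratic {a b c x : ℝ} (ha : 0 < a) (hc : 0 < c) (hx : 0 < x)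
    (hneg : a * x ^ 2 + b * x + c < 0) :
    ∃ r₁ r₂ : ℝ, 0 < r₁ ∧ r₁ < x ∧ x < r₂ ∧
      a * r₁ ^ 2 + b * r₁ + c = 0 ∧ a * r₂ ^ 2 + b * r₂ + c = 0 ∧
      ∀ y : ℝ, a * y ^ 2 + b * y + c = 0 → y = r₁ ∨ y = r₂ := by
  obtain ⟨r₁, r₂, hr₁, hr₂, hfac⟩ := exists_quadratic_eq_mul_sub_mul_sub_of_neg ha hneg
  have hprod : 0 < a * (r₁ * r₂) := by linarith [hfac 0]
  have hr₁pos : 0 < r₁ := pos_of_mul_pos_left (pos_of_mul_pos_right hprod ha.le) (by linarith)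
  refine ⟨r₁, r₂, hr₁pos, hr₁, hr₂, by simp [hfac], by simp [hfac], fun y hy => ?_⟩
  rw [hfac] at hy
  rcases mul_eq_zero.mp hy with h | h
  · exact .inl (sub_eq_zero.mp ((mul_eq_zero.mp h).resolve_left ha.ne'))
  · exact .inr (sub_eq_zero.mp h)

theorem haldaneQuad_self (μmax R : ℝ) {θ Istar : ℝ} (hθ : θ ≠ 0) (hI : Istar ≠ 0) :
    haldaneQuad μmax θ Istar R Istar = (R - μmax) * Istar := by
  rw [haldaneQuad]
  field_simp
  ring

theorem stmt2_general (μmax θ Istar R : ℝ) (hθ : 0 < θ) (hI : 0 < Istar)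
    (hR0 : 0 < R) (hR : R < μmax) :
    ∃ I₁ I₂ : ℝ, 0 < I₁ ∧ I₁ < Istar ∧ Istar < I₂ ∧
      haldaneQuad μmax θ Istar R I₁ = 0 ∧ haldaneQuad μmax θ Istar R I₂ = 0 ∧
      ∀ I : ℝ, haldaneQuad μmax θ Istar R I = 0 → I = I₁ ∨ I = I₂ := by
  have hμ : 0 < μmax := hR0.trans hR
  have hneg : haldaneQuad μmax θ Istar R Istar < 0 := by
    rw [haldaneQuad_self μmax R hθ.ne' hI.ne']
    exact mul_neg_of_neg_of_pos (by linarith) hI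
  exact exists_two_pos_roots_of_quadratic (by positivity) (by positivity) hI hneg

theorem stmt2 (μmax θ Istar R : ℝ) (hμ : 0 < μmax) (hθ : 0 < θ) (hI : 0 < Istar)
    (hR0 : 0 < R) (hR : R < μmax) :
    ∃ I₁ I₂ : ℝ, 0 < I₁ ∧ I₁ < Istar ∧ Istar < I₂ ∧
      haldaneQuad μmax θ Istar R I₁ = 0 ∧ haldaneQuad μmax θ Istar R I₂ = 0 ∧
      ∀ I : ℝ, haldaneQuad μmax θ Istar R I = 0 → I = I₁ ∨ I = I₂ :=
  stmt2_general μmax θ Istar R hθ hI hR0 hR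
end

section
/- If the extinction function is ε(X) = α₀X (i.e. α₁ = 0 and s = 1 with α₀ > 0), then the surface productivity Π(X,h) = (μ̄(X,h) − R)·X·h equals P(ε(X)h)/α₀ where P(Y) = ∫_0^Y(μ(I_s e^{−y}) − R)dy; consequently any pair (X,h) with ε(X)h = Y_opt globally maximizes Π over (0,∞)², and the optimal surface biomass is Xh = Y_opt/α₀. -/
open Real Set intervalIntegral

/-- Haldane growth rate. -/
noncomputable def haldane (μmax θ Istar I : ℝ) : ℝ :=
  μmax * I / (I + (μmax / θ) * (I / Istar - 1) ^ 2)

/-- Optical depth productivity P(Y) = ∫₀^Y (μ(I_s e^{−y}) − R) dy. -/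
noncomputable def opticalP (μmax θ Istar Is R Y : ℝ) : ℝ :=
  ∫ y in (0 : ℝ)..Y, (haldane μmax θ Istar (Is * Real.exp (-y)) - R)

/-- Mean growth rate μ̄(X,h) for extinction coefficient ε. -/
noncomputable def meanMu (μmax θ Istar Is : ℝ) (ε : ℝ → ℝ) (X h : ℝ) : ℝ :=
  (1 / (ε X * h)) * ∫ y in (0 : ℝ)..(ε X * h), haldane μmax θ Istar (Is * Real.exp (-y))

/-- Surface biomass productivity Π(X,h) = (μ̄(X,h) − R)·X·h. -/
noncomputable def surfProd (μmax θ Istar Is R : ℝ) (ε : ℝ → ℝ) (X h : ℝ) : ℝ :=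
  (meanMu μmax θ Istar Is ε X h - R) * X * h

lemma continuous_haldane_comp_mul_exp_neg {μmax θ Istar Is : ℝ} (hμ : 0 ≤ μmax) (hθ : 0 ≤ θ)
    (hIs : 0 < Is) : Continuous fun y : ℝ => haldane μmax θ Istar (Is * exp (-y)) := by
  refine Continuous.div (by fun_prop) (by fun_prop) fun y => ?_
  have hI : 0 < Is * exp (-y) := by positivity
  have hμθ : 0 ≤ μmax / θ := div_nonneg hμ hθ
  positivity

lemma opticalP_eq_integral_haldane_sub {μmax θ Istar Is : ℝ} (R Y : ℝ) (hμ : 0 ≤ μmax)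
    (hθ : 0 ≤ θ) (hIs : 0 < Is) :
    opticalP μmax θ Istar Is R Y =
      (∫ y in (0 : ℝ)..Y, haldane μmax θ Istar (Is * exp (-y))) - R * Y := by
  rw [opticalP, integral_sub
    ((continuous_haldane_comp_mul_exp_neg hμ hθ hIs).intervalIntegrable 0 Y)
    intervalIntegrable_const, integral_const, smul_eq_mul, sub_zero, mul_comm]

lemma surfProd_mul_left_eq {μmax θ Istar Is α₀ X h : ℝ} (R : ℝ) (hμ : 0 ≤ μmax) (hθ : 0 ≤ θ)
    (hIs : 0 < Is) (hα₀ : α₀ ≠ 0) (hX : X ≠ 0) (hh : h ≠ 0) :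
    surfProd μmax θ Istar Is R (fun X => α₀ * X) X h =
      opticalP μmax θ Istar Is R (α₀ * X * h) / α₀ := by
  rw [surfProd, meanMu, opticalP_eq_integral_haldane_sub R _ hμ hθ hIs]
  field_simp

theorem stmt8_general (μmax θ Istar Is R α₀ Yopt : ℝ)
    (hμ : 0 < μmax) (hθ : 0 < θ) (hIs : 0 < Is)
    (hα₀ : 0 < α₀)
    (hmax : ∀ Y ≥ 0, opticalP μmax θ Istar Is R Y ≤ opticalP μmax θ Istar Is R Yopt) :
    let ε : ℝ → ℝ := fun X => α₀ * X
    (∀ X > 0, ∀ h > 0,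
        surfProd μmax θ Istar Is R ε X h = opticalP μmax θ Istar Is R (ε X * h) / α₀) ∧
    (∀ X > 0, ∀ h > 0, ε X * h = Yopt →
        (∀ X' > 0, ∀ h' > 0,
            surfProd μmax θ Istar Is R ε X' h' ≤ surfProd μmax θ Istar Is R ε X h) ∧
        X * h = Yopt / α₀) := by
  intro ε
  have hprod : ∀ X > 0, ∀ h > 0,
      surfProd μmax θ Istar Is R ε X h = opticalP μmax θ Istar Is R (ε X * h) / α₀ :=
    fun X hX h hh => surfProd_mul_left_eq R hμ.le hθ.le hIs hα₀.ne' hX.ne' hh.ne'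
  refine ⟨hprod, fun X hX h hh hY => ⟨fun X' hX' h' hh' => ?_, ?_⟩⟩
  · rw [hprod X hX h hh, hprod X' hX' h' hh', hY]
    have hY' : 0 ≤ ε X' * h' := by positivity
    gcongr
    exact hmax _ hY'
  · rw [eq_div_iff hα₀.ne', ← hY]
    ring

theorem stmt8 (μmax θ Istar Is R α₀ Yopt : ℝ)
    (hμ : 0 < μmax) (hθ : 0 < θ) (hI : 0 < Istar) (hIs : 0 < Is)
    (hR0 : 0 < R) (hR : R < μmax) (hsurf : R < haldane μmax θ Istar Is)
    (hα₀ : 0 < α₀)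
    (hYopt : 0 < Yopt)
    (hmax : ∀ Y ≥ 0, opticalP μmax θ Istar Is R Y ≤ opticalP μmax θ Istar Is R Yopt) :
    let ε : ℝ → ℝ := fun X => α₀ * X
    (∀ X > 0, ∀ h > 0,
        surfProd μmax θ Istar Is R ε X h = opticalP μmax θ Istar Is R (ε X * h) / α₀) ∧
    (∀ X > 0, ∀ h > 0, ε X * h = Yopt →
        (∀ X' > 0, ∀ h' > 0,
            surfProd μmax θ Istar Is R ε X' h' ≤ surfProd μmax θ Istar Is R ε X h) ∧
        X * h = Yopt / α₀) :=
  stmt8_general μmax θ Istar Is R α₀ Yopt hμ hθ hIs hα₀ hmax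
end

section
/- Let ε(X) = α₀X + α₁ with α₀ > 0 and α₁ > 0, and Π(X,h) = (X/ε(X))·P(ε(X)h) where P has a unique global maximizer Y_opt with P strictly increasing before and strictly decreasing after. Then Π has no global maximum on (0,∞) × (0,∞). -/
/-! Since `P` peaks at `Y_opt`, `Π(X, h) ≤ (X / ε(X)) · P(Y_opt)`, with equality when `ε(X) h = Y_opt`.
As `α₁ > 0`, the factor `X / ε(X)` is strictly increasing, so moving to `X + 1` and re-tuning `h`
so that `ε(X + 1) h' = Y_opt` strictly improves on any candidate maximiser. -/

open Set

theorem isMaxOn_Ici_of_monotoneOn_Icc_of_antitoneOn_Ici {α β : Type*} [LinearOrder α] [Preorder β]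
    {f : α → β} {a b : α} (hmono : MonotoneOn f (Icc a b)) (hanti : AntitoneOn f (Ici b)) :
    IsMaxOn f (Ici a) b := by
  intro y (hy : a ≤ y)
  rcases le_total y b with hyb | hby
  · exact hmono ⟨hy, hyb⟩ ⟨hy.trans hyb, le_rfl⟩ hyb
  · exact hanti self_mem_Ici hby hby

theorem strictMonoOn_div_mul_add {𝕜 : Type*} [Field 𝕜] [LinearOrder 𝕜] [IsStrictOrderedRing 𝕜]
    {a b : 𝕜} (ha : 0 ≤ a) (hb : 0 < b) : StrictMonoOn (fun x => x / (a * x + b)) (Ici 0) := by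
  intro x (hx : 0 ≤ x) y (hy : 0 ≤ y) hxy
  rw [div_lt_div_iff₀ (by positivity) (by positivity)]
  nlinarith

/-- The paper's `Π(X, h)`. -/
noncomputable def profit (α₀ α₁ : ℝ) (P : ℝ → ℝ) (X h : ℝ) : ℝ :=
  X / (α₀ * X + α₁) * P ((α₀ * X + α₁) * h)

theorem exists_profit_gt {α₀ α₁ Yopt : ℝ} {P : ℝ → ℝ} (hα₀ : 0 ≤ α₀) (hα₁ : 0 < α₁)
    (hYopt : 0 < Yopt) (hpeak : IsMaxOn P (Ici 0) Yopt) (hPpos : 0 < P Yopt)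
    {X h : ℝ} (hX : 0 ≤ X) (hh : 0 ≤ h) :
    ∃ X' h', 0 < X' ∧ 0 < h' ∧ profit α₀ α₁ P X h < profit α₀ α₁ P X' h' := by
  set ε := α₀ * X + α₁
  set ε' := α₀ * (X + 1) + α₁
  have hε' : 0 < ε' := by positivity
  refine ⟨X + 1, Yopt / ε', by linarith, by positivity, ?_⟩
  calc profit α₀ α₁ P X h = X / ε * P (ε * h) := rfl
    _ ≤ X / ε * P Yopt :=
      mul_le_mul_of_nonneg_left (hpeak (mem_Ici.2 (by positivity))) (by positivity)
    _ < (X + 1) / ε' * P Yopt :=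
      mul_lt_mul_of_pos_right
        (strictMonoOn_div_mul_add hα₀ hα₁ hX (by positivity : (0 : ℝ) ≤ X + 1) (by linarith)) hPpos
    _ = profit α₀ α₁ P (X + 1) (Yopt / ε') := by
      rw [profit, mul_div_cancel₀ _ hε'.ne']

theorem stmt11 (α₀ α₁ Yopt : ℝ) (P : ℝ → ℝ)
    (hα₀ : 0 < α₀) (hα₁ : 0 < α₁) (hYopt : 0 < Yopt)
    (hmono : StrictMonoOn P (Icc 0 Yopt))
    (hanti : StrictAntiOn P (Ici Yopt))
    (hPpos : 0 < P Yopt) :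
    ¬ ∃ X h : ℝ, 0 < X ∧ 0 < h ∧
      ∀ X' h' : ℝ, 0 < X' → 0 < h' →
        (X' / (α₀ * X' + α₁)) * P ((α₀ * X' + α₁) * h') ≤
          (X / (α₀ * X + α₁)) * P ((α₀ * X + α₁) * h) := by
  rintro ⟨X, h, hX, hh, hmax⟩
  have hpeak : IsMaxOn P (Ici 0) Yopt :=
    isMaxOn_Ici_of_monotoneOn_Icc_of_antitoneOn_Ici hmono.monotoneOn hanti.antitoneOn
  obtain ⟨X', h', hX', hh', hgt⟩ := exists_profit_gt hα₀.le hα₁ hYopt hpeak hPpos hX.le hh.le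
  exact (hmax X' h' hX' hh').not_gt hgt
end

section
/- Applying the quasi-steady-state reduction to the Han model (setting A = (1−C)/(τσI+1)), the resulting steady-state growth rate μ_Han(I) = kσI / ((k_d/k_r)τ(σI)² + τσI + 1) is identical to the Haldane form μ(I) = μ_max·I/(I + (μ_max/θ)(I/I*−1)²) with θ = kσ, I* = √(k_r/(k_d τ σ²)), and μ_max = kσ/(τσ + 2√(k_d τ σ²/k_r)). -/
/-!
Writing `s = √(k_d τ σ² / k_r)`, so that `I* = 1 / s` and `μ_max / θ = 1 / (τσ + 2s)`, the
Haldane denominator times `τσ + 2s` is `(τσ + 2s) I + (s I - 1)² = s² I² + τσ I + 1`,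
which is the Han denominator because `s² = (k_d / k_r) τ σ²`.
-/

open Real

noncomputable def haldaneRate (μmax θ Istar I : ℝ) : ℝ :=
  μmax * I / (I + μmax / θ * (I / Istar - 1) ^ 2)

theorem haldaneRate_eq_div_quadratic (θ p s I : ℝ) (hps : p + 2 * s ≠ 0) :
    haldaneRate (θ / (p + 2 * s)) θ s⁻¹ I = θ * I / (s ^ 2 * I ^ 2 + p * I + 1) := by
  rcases eq_or_ne θ 0 with rfl | hθ
  · simp [haldaneRate]
  have hdenom : I + θ / (p + 2 * s) / θ * (I / s⁻¹ - 1) ^ 2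
      = (s ^ 2 * I ^ 2 + p * I + 1) / (p + 2 * s) := by
    field_simp
    ring
  rw [haldaneRate, hdenom, div_mul_eq_mul_div, div_div_div_cancel_right₀ hps]

theorem stmt18_general (k σ τ kd kr : ℝ)
    (hσ : 0 < σ) (hτ : 0 < τ) (hkd : 0 < kd) (hkr : 0 < kr) :
    ∀ I : ℝ, 0 < I →
      k * σ * I / ((kd / kr) * τ * (σ * I) ^ 2 + τ * σ * I + 1) =
        (k * σ / (τ * σ + 2 * Real.sqrt (kd * τ * σ ^ 2 / kr))) * I /
          (I + ((k * σ / (τ * σ + 2 * Real.sqrt (kd * τ * σ ^ 2 / kr))) / (k * σ)) *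
            (I / Real.sqrt (kr / (kd * τ * σ ^ 2)) - 1) ^ 2) := by
  intro I _
  set s := √(kd * τ * σ ^ 2 / kr)
  have hIstar : √(kr / (kd * τ * σ ^ 2)) = s⁻¹ := by rw [← sqrt_inv, inv_div]
  have hs_sq : s ^ 2 = kd * τ * σ ^ 2 / kr := sq_sqrt (by positivity)
  have hps : τ * σ + 2 * s ≠ 0 := by positivity
  have hquad : (kd / kr) * τ * (σ * I) ^ 2 = s ^ 2 * I ^ 2 := by rw [hs_sq]; ring
  rw [hIstar, hquad]
  exact (haldaneRate_eq_div_quadratic (k * σ) (τ * σ) s I hps).symm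

theorem stmt18 (k σ τ kd kr : ℝ)
    (hk : 0 < k) (hσ : 0 < σ) (hτ : 0 < τ) (hkd : 0 < kd) (hkr : 0 < kr) :
    ∀ I : ℝ, 0 < I →
      k * σ * I / ((kd / kr) * τ * (σ * I) ^ 2 + τ * σ * I + 1) =
        (k * σ / (τ * σ + 2 * Real.sqrt (kd * τ * σ ^ 2 / kr))) * I /
          (I + ((k * σ / (τ * σ + 2 * Real.sqrt (kd * τ * σ ^ 2 / kr))) / (k * σ)) *
            (I / Real.sqrt (kr / (kd * τ * σ ^ 2)) - 1) ^ 2) :=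
  stmt18_general k σ τ kd kr hσ hτ hkd hkr
end
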